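/- Let H be a directed m-uniform hypergraph on n vertices, and let L_H = L_H⁺ + L_H⁻ and 𝕃_H = 𝕃_H⁺ + 𝕃_H⁻. Let L_{H_D} = D_{H_D} − A_{H_D} and 𝕃_{H_D} = D_{H_D} + A_{H_D} be the Laplacian and signless Laplacian hypermatrices of the underlying undirected hypergraph H_D. Then L_H and L_{H_D} are isospectral (have the same eigenvalues), and 𝕃_H and 𝕃_{H_D} are isospectral. -/

import Mathlib

open Finset

/-- `(A x^{m-1})_i` for a real order-`m` dimension-`n` hypermatrix `A`
and a real vector `x`. -/
noncomputable def hmApply {m n : ℕ} (hm : 0 < m) (A : (Fin m → Fin n) → ℝ)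
    (x : Fin n → ℝ) (i : Fin n) : ℝ :=
  ∑ f ∈ Finset.univ.filter (fun f : Fin m → Fin n => f ⟨0, hm⟩ = i),
    A f * ∏ j ∈ Finset.univ.filter (fun j : Fin m => j ≠ ⟨0, hm⟩), x (f j)

/-- `(A x^{m-1})_i` for a real hypermatrix `A` and a complex vector `x`. -/
noncomputable def hmApplyC {m n : ℕ} (hm : 0 < m) (A : (Fin m → Fin n) → ℝ)
    (x : Fin n → ℂ) (i : Fin n) : ℂ :=
  ∑ f ∈ Finset.univ.filter (fun f : Fin m → Fin n => f ⟨0, hm⟩ = i),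
    (A f : ℂ) * ∏ j ∈ Finset.univ.filter (fun j : Fin m => j ≠ ⟨0, hm⟩), x (f j)

/-- `A x^m`, the homogeneous form associated with a hypermatrix. -/
noncomputable def formEval {m n : ℕ} (A : (Fin m → Fin n) → ℝ) (x : Fin n → ℝ) : ℝ :=
  ∑ f : Fin m → Fin n, A f * ∏ j, x (f j)

/-- `lam ∈ ℂ` is an eigenvalue of `A`:  there is a nonzero complex vector `x` with
`(A x^{m-1})_i = lam * x_i^{m-1}` for all `i`. -/
def IsEigenvalue {m n : ℕ} (hm : 0 < m) (A : (Fin m → Fin n) → ℝ) (lam : ℂ) : Prop :=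
  ∃ x : Fin n → ℂ, x ≠ 0 ∧ ∀ i, hmApplyC hm A x i = lam * (x i) ^ (m - 1)

/-- `(lam, x)` is an H-eigenpair of `A` (both real). -/
def IsHEigenpair {m n : ℕ} (hm : 0 < m) (A : (Fin m → Fin n) → ℝ)
    (lam : ℝ) (x : Fin n → ℝ) : Prop :=
  x ≠ 0 ∧ ∀ i, hmApply hm A x i = lam * (x i) ^ (m - 1)

/-- `(lam, x)` is a Z-eigenpair of `A`:  `A x^{m-1} = lam x` and `∑ x_i² = 1`. -/
def IsZEigenpair {m n : ℕ} (hm : 0 < m) (A : (Fin m → Fin n) → ℝ)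
    (lam : ℝ) (x : Fin n → ℝ) : Prop :=
  (∀ i, hmApply hm A x i = lam * x i) ∧ ∑ i, (x i) ^ 2 = 1

/-- The spectral radius of `A`: the largest modulus of an eigenvalue. -/
noncomputable def specRad {m n : ℕ} (hm : 0 < m) (A : (Fin m → Fin n) → ℝ) : ℝ :=
  sSup {r : ℝ | ∃ lam : ℂ, IsEigenvalue hm A lam ∧ r = ‖lam‖}

/-- The largest Z-eigenvalue of `A`. -/
noncomputable def zMax {m n : ℕ} (hm : 0 < m) (A : (Fin m → Fin n) → ℝ) : ℝ :=
  sSup {lam : ℝ | ∃ x : Fin n → ℝ, IsZEigenpair hm A lam x}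

/-- `A` is copositive: `A x^m ≥ 0` for every entrywise nonnegative real `x`. -/
def Copositive {m n : ℕ} (A : (Fin m → Fin n) → ℝ) : Prop :=
  ∀ x : Fin n → ℝ, (∀ i, 0 ≤ x i) → 0 ≤ formEval A x

/-- A directed hypergraph on vertex set `Fin n`: each edge is a pair
(tail, head) of disjoint nonempty vertex sets, and distinct edges have
distinct vertex sets. -/
structure DirHypergraph (n : ℕ) where
  edges : Finset (Finset (Fin n) × Finset (Fin n))
  tail_nonempty : ∀ e ∈ edges, e.1.Nonempty
  head_nonempty : ∀ e ∈ edges, e.2.Nonempty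
  tail_head_disjoint : ∀ e ∈ edges, Disjoint e.1 e.2
  union_injective : ∀ e ∈ edges, ∀ e' ∈ edges, e.1 ∪ e.2 = e'.1 ∪ e'.2 → e = e'

namespace DirHypergraph

variable {n : ℕ}

/-- `H` is `m`-uniform. -/
def IsUniform (H : DirHypergraph n) (m : ℕ) : Prop :=
  ∀ e ∈ H.edges, (e.1 ∪ e.2).card = m

/-- `H` is non-uniform: it has two edges of different cardinalities. -/
def NonUniform (H : DirHypergraph n) : Prop :=
  ∃ e ∈ H.edges, ∃ e' ∈ H.edges, (e.1 ∪ e.2).card ≠ (e'.1 ∪ e'.2).card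

/-- `m = m.c.e.(H)`, the maximum cardinality of an edge (the rank of `H`). -/
def mce (H : DirHypergraph n) (m : ℕ) : Prop :=
  (∀ e ∈ H.edges, (e.1 ∪ e.2).card ≤ m) ∧ ∃ e ∈ H.edges, (e.1 ∪ e.2).card = m

/-- `c = corank(H)`, the minimum cardinality of an edge. -/
def corank (H : DirHypergraph n) (c : ℕ) : Prop :=
  (∀ e ∈ H.edges, c ≤ (e.1 ∪ e.2).card) ∧ ∃ e ∈ H.edges, (e.1 ∪ e.2).card = c

end DirHypergraph

variable {n : ℕ}

/-- Out-degree of a vertex. -/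
def outDeg (H : DirHypergraph n) (v : Fin n) : ℕ :=
  (H.edges.filter (fun e => v ∈ e.1)).card

/-- In-degree of a vertex. -/
def inDeg (H : DirHypergraph n) (v : Fin n) : ℕ :=
  (H.edges.filter (fun e => v ∈ e.2)).card

/-- Degree of a vertex in the underlying undirected hypergraph. -/
def undDeg (H : DirHypergraph n) (v : Fin n) : ℕ :=
  (H.edges.filter (fun e => v ∈ e.1 ∪ e.2)).card

/-- The maximum out-degree `Δ⁺`. -/
noncomputable def maxOutDeg (H : DirHypergraph n) : ℝ :=
  sSup (Set.range fun v => (outDeg H v : ℝ))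

/-- The minimum out-degree `δ⁺`. -/
noncomputable def minOutDeg (H : DirHypergraph n) : ℝ :=
  sInf (Set.range fun v => (outDeg H v : ℝ))

/-- The out-adjacency hypermatrix of a directed `m`-uniform hypergraph:
the entry at the tuple `f = (i₁, …, i_m)` is `1/((m-k)!(k-1)!)` when, for some
edge `e` with `k = |T_e|`, the first `k` indices are exactly the distinct
elements of `T_e` and the last `m - k` indices are exactly the distinct
elements of `H_e`; all other entries are zero. -/
noncomputable def outAdj (m : ℕ) (H : DirHypergraph n) (f : Fin m → Fin n) : ℝ :=
  ∑ e ∈ H.edges,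
    if ((Finset.univ.filter fun j : Fin m => (j : ℕ) < e.1.card).image f = e.1 ∧
        (Finset.univ.filter fun j : Fin m => e.1.card ≤ (j : ℕ)).image f = e.2)
    then (1 : ℝ) / ((((m - e.1.card).factorial * (e.1.card - 1).factorial : ℕ)) : ℝ)
    else 0

/-- The in-adjacency hypermatrix of a directed `m`-uniform hypergraph. -/
noncomputable def inAdj (m : ℕ) (H : DirHypergraph n) (f : Fin m → Fin n) : ℝ :=
  ∑ e ∈ H.edges,
    if ((Finset.univ.filter fun j : Fin m => (j : ℕ) < m - e.1.card).image f = e.2 ∧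
        (Finset.univ.filter fun j : Fin m => m - e.1.card ≤ (j : ℕ)).image f = e.1)
    then (1 : ℝ) / ((((m - e.1.card - 1).factorial * (e.1.card).factorial : ℕ)) : ℝ)
    else 0

/-- The adjacency hypermatrix of the underlying undirected hypergraph `H_D`. -/
noncomputable def undAdj (m : ℕ) (H : DirHypergraph n) (f : Fin m → Fin n) : ℝ :=
  ∑ e ∈ H.edges,
    if (Function.Injective f ∧ Finset.univ.image f = e.1 ∪ e.2)
    then (1 : ℝ) / (((m - 1).factorial : ℕ) : ℝ)
    else 0

/-- The supersymmetric hypermatrix `B` with `b_{i₁…i_m} = |T_e|/m!` whenever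
`i₁, …, i_m` are distinct and `{i₁, …, i_m} = T_e ∪ H_e` for an edge `e`. -/
noncomputable def symB (m : ℕ) (H : DirHypergraph n) (f : Fin m → Fin n) : ℝ :=
  ∑ e ∈ H.edges,
    if (Function.Injective f ∧ Finset.univ.image f = e.1 ∪ e.2)
    then (e.1.card : ℝ) / (m.factorial : ℝ)
    else 0

/-- The order-`m` diagonal hypermatrix with diagonal entries `d`. -/
noncomputable def diagHM (m : ℕ) (d : Fin n → ℝ) (f : Fin m → Fin n) : ℝ :=
  ∑ i : Fin n, if f = (fun _ => i) then d i else 0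

/-- The normalizing constant `α` in the definition of the out-adjacency
hypermatrix of a general (non-uniform) directed hypergraph, for an edge with
tail of size `k` and `s` vertices in total, inside a rank-`m` hypergraph. -/
def alphaVal (m k s : ℕ) : ℕ :=
  ∑ r ∈ Finset.range (m - s + 1),
    (∑ t ∈ (Finset.Nat.antidiagonalTuple k (r + k)).filter (fun t => ∀ i, 1 ≤ t i),
        Nat.multinomial Finset.univ t) *
    (∑ t ∈ (Finset.Nat.antidiagonalTuple (s - k) (m - k - r)).filter (fun t => ∀ i, 1 ≤ t i),
        Nat.multinomial Finset.univ t)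

/-- The out-adjacency hypermatrix of a general directed (non-uniform)
hypergraph of rank `m`:  the entry at `f = (p₁, …, p_m)` is `k/α` when for some
edge `e` (with `|T_e| = k`, `|T_e ∪ H_e| = s`) and some `t` with
`k ≤ t ≤ m - s + k`, the first `t` indices all lie in `T_e`, covering it, and
the remaining indices all lie in `H_e`, covering it; other entries are zero. -/
noncomputable def outAdjNU (m : ℕ) (H : DirHypergraph n) (f : Fin m → Fin n) : ℝ :=
  ∑ e ∈ H.edges,
    ∑ t ∈ Finset.Icc e.1.card (m - (e.1.card + e.2.card) + e.1.card),
      if ((Finset.univ.filter fun j : Fin m => (j : ℕ) < t).image f = e.1 ∧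
          (Finset.univ.filter fun j : Fin m => t ≤ (j : ℕ)).image f = e.2)
      then (e.1.card : ℝ) / (alphaVal m e.1.card (e.1.card + e.2.card) : ℝ)
      else 0

/-!
For each of the three adjacency hypermatrices, row `i` of `A x^{m-1}` is a sum over the edges `e`
of the monomial `∏_{v ∈ e, v ≠ i} x_v`: the index tuples of `e` starting with `i` that carry a
nonzero entry are the orderings of `e` respecting its tail/head blocks, and their number
(`(|T_e| - 1)! |H_e|!` for `A⁺` when `i ∈ T_e`, `(|H_e| - 1)! |T_e|!` for `A⁻` when `i ∈ H_e`,
`(m - 1)!` for `A_{H_D}` when `i ∈ e`) is exactly cancelled by the normalising entry. Since every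
vertex of `e` lies in exactly one of `T_e`, `H_e`, this gives `(A⁺ + A⁻) x^{m-1} = A_{H_D} x^{m-1}`;
together with `d⁺ + d⁻ = d`, the hypermatrices in each pair define the same map `x ↦ A x^{m-1}`,
hence have the same eigenpairs.
-/

open scoped Nat

section Counting

theorem image_swap_eq_self {β : Type*} [DecidableEq β] {S : Finset β} {a b : β}
    (h : a ∈ S ↔ b ∈ S) : S.image (Equiv.swap a b) = S :=
  coe_injective <| by rw [coe_image]; exact (Equiv.swap_bijOn_self (by simpa)).image_eq

variable {α β : Type*} [Fintype α] [DecidableEq α] [DecidableEq β]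

noncomputable def imageUnivEqEquiv (S : Finset β) (h : Fintype.card α = #S) :
    {f : α → β // univ.image f = S} ≃ (α ≃ S) where
  toFun f := Equiv.ofBijective (fun a => ⟨f.1 a, f.2.le (mem_image_of_mem f.1 (mem_univ a))⟩) <|
    (Fintype.bijective_iff_surjective_and_card _).2
      ⟨fun b => by
        obtain ⟨a, -, ha⟩ := mem_image.1 (f.2.ge b.2)
        exact ⟨a, Subtype.ext ha⟩, by simp [h]⟩
  invFun e := ⟨fun a => e a, by
    ext b
    simp only [mem_image, mem_univ, true_and]
    exact ⟨by rintro ⟨a, rfl⟩; exact (e a).2, fun hb => ⟨e.symm ⟨b, hb⟩, by simp⟩⟩⟩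
  left_inv f := rfl
  right_inv e := by ext; rfl

theorem card_filter_image_univ_eq [Fintype β] (S : Finset β) (h : Fintype.card α = #S) :
    #{f : α → β | univ.image f = S} = (#S)! := by
  rw [← Fintype.card_subtype, Fintype.card_congr (imageUnivEqEquiv S h),
    Fintype.card_equiv (Fintype.equivOfCardEq (by simp [h])), h]

theorem image_univ_subtype (p : α → Prop) [DecidablePred p] [Fintype {a // p a}] (f : α → β) :
    (univ : Finset {a // p a}).image (fun a : {a // p a} => f a) = (univ.filter p).image f := by
  rw [← univ_map_subtype p, map_eq_image, image_image]
  rfl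

theorem card_filter_image_eq_and_image_compl_eq [Fintype β] (A : Finset α) (S₁ S₂ : Finset β)
    (h₁ : #A = #S₁) (h₂ : #Aᶜ = #S₂) :
    #{f : α → β | A.image f = S₁ ∧ Aᶜ.image f = S₂} = (#S₁)! * (#S₂)! := by
  rw [card_equiv (Equiv.piEquivPiSubtypeProd (· ∈ A) fun _ => β)
    (t := univ ×ˢ univ |>.filter fun g => univ.image g.1 = S₁ ∧ univ.image g.2 = S₂) fun f => by
      simp only [mem_filter, mem_univ, true_and, mem_product, Equiv.piEquivPiSubtypeProd_apply,
        image_univ_subtype, filter_univ_mem, ← compl_filter]]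
  rw [filter_product (fun g : {a // a ∈ A} → β => univ.image g = S₁)
      (fun g : {a // a ∉ A} → β => univ.image g = S₂), card_product,
    card_filter_image_univ_eq S₁ (by simpa using h₁),
    card_filter_image_univ_eq S₂ (by simpa [Fintype.card_subtype_compl, card_compl] using h₂)]

theorem card_filter_apply_eq_and_image_eq_and_image_compl_eq [Fintype β] (A : Finset α)
    (S₁ S₂ : Finset β) (hS : Disjoint S₁ S₂) (h₁ : #A = #S₁) (h₂ : #Aᶜ = #S₂)
    {z : α} (hz : z ∈ A) {i : β} (hi : i ∈ S₁) :
    #{f : α → β | f z = i ∧ A.image f = S₁ ∧ Aᶜ.image f = S₂} = (#S₁ - 1)! * (#S₂)! := by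
  set F := ({f : α → β | A.image f = S₁ ∧ Aᶜ.image f = S₂} : Finset _)
  have hmaps : (F : Set (α → β)).MapsTo (· z) S₁ := fun f hf =>
    (mem_filter.1 hf).2.1 ▸ mem_image_of_mem f hz
  -- post-composing with the transposition `(i s)` preserves `F` and moves the fibre over `i`
  -- to the fibre over `s`
  have hfiber : ∀ s ∈ S₁, #{f ∈ F | f z = s} = #{f ∈ F | f z = i} := by
    intro s hs
    have hswap : ∀ f ∈ F, Equiv.swap i s ∘ f ∈ F := by
      intro f hf
      obtain ⟨-, hf₁, hf₂⟩ := mem_filter.1 hf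
      simp only [F, mem_filter, mem_univ, true_and, ← image_image, hf₁, hf₂]
      exact ⟨image_swap_eq_self (iff_of_true hi hs), image_swap_eq_self
        (iff_of_false (disjoint_left.1 hS hi) (disjoint_left.1 hS hs))⟩
    refine card_nbij' (Equiv.swap i s ∘ ·) (Equiv.swap i s ∘ ·) ?_ ?_ ?_ ?_
    iterate 2
      intro f hf
      simp only [coe_filter, Set.mem_ofPred_eq] at hf ⊢
      exact ⟨hswap f hf.1, by simp [hf.2]⟩
    all_goals intro f _; ext; simp
  have hcount := card_eq_sum_card_fiberwise hmaps
  rw [sum_congr rfl hfiber, sum_const, smul_eq_mul,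
    card_filter_image_eq_and_image_compl_eq A S₁ S₂ h₁ h₂,
    ← Nat.mul_factorial_pred (card_pos.2 ⟨i, hi⟩).ne', mul_assoc] at hcount
  rw [Nat.eq_of_mul_eq_mul_left (card_pos.2 ⟨i, hi⟩) hcount, filter_filter]
  simp only [and_comm]

theorem sum_filter_apply_eq_and_image_eq_and_image_compl_eq {R : Type*} [CommSemiring R]
    [Fintype β] (A : Finset α) (S₁ S₂ : Finset β) (hS : Disjoint S₁ S₂) (h₁ : #A = #S₁)
    (h₂ : #Aᶜ = #S₂) {z : α} (hz : z ∈ A) (i : β) (x : β → R) :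
    ∑ f : α → β with f z = i ∧ A.image f = S₁ ∧ Aᶜ.image f = S₂, ∏ j ∈ univ.erase z, x (f j) =
      if i ∈ S₁ then (((#S₁ - 1)! * (#S₂)! : ℕ) : R) * ∏ v ∈ (S₁ ∪ S₂).erase i, x v else 0 := by
  split_ifs with hi
  · rw [← card_filter_apply_eq_and_image_eq_and_image_compl_eq A S₁ S₂ hS h₁ h₂ hz hi,
      ← nsmul_eq_mul, ← sum_const]
    refine sum_congr rfl fun f hf => ?_
    obtain ⟨hfz, hf₁, hf₂⟩ := (mem_filter.1 hf).2
    have himage : univ.image f = S₁ ∪ S₂ := by rw [← union_compl A, image_union, hf₁, hf₂]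
    have hinj : Function.Injective f := by
      rw [← Set.injOn_univ, ← coe_univ, ← card_image_iff, himage, card_union_of_disjoint hS,
        ← h₁, ← h₂, card_add_card_compl, card_univ]
    rw [← prod_image hinj.injOn, image_erase hinj, himage, hfz]
  · refine sum_eq_zero fun f hf => absurd ?_ hi
    obtain ⟨hfz, hf₁, -⟩ := (mem_filter.1 hf).2
    exact hfz ▸ hf₁ ▸ mem_image_of_mem f hz

theorem sum_filter_apply_eq_and_image_lt_and_image_ge {R : Type*} [CommSemiring R] [Fintype β]
    {m : ℕ} (S₁ S₂ : Finset β) (hS : Disjoint S₁ S₂) (hm : #S₁ + #S₂ = m) {z : Fin m}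
    (hz : (z : ℕ) < #S₁) (i : β) (x : β → R) :
    ∑ f : Fin m → β with f z = i ∧ (univ.filter fun j : Fin m => (j : ℕ) < #S₁).image f = S₁ ∧
        (univ.filter fun j : Fin m => #S₁ ≤ (j : ℕ)).image f = S₂, ∏ j ∈ univ.erase z, x (f j) =
      if i ∈ S₁ then (((#S₁ - 1)! * (#S₂)! : ℕ) : R) * ∏ v ∈ (S₁ ∪ S₂).erase i, x v else 0 := by
  have hcompl : (univ.filter fun j : Fin m => #S₁ ≤ (j : ℕ)) =
      (univ.filter fun j : Fin m => (j : ℕ) < #S₁)ᶜ := by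
    ext; simp
  have hcard : #{j : Fin m | (j : ℕ) < #S₁} = #S₁ := by
    rw [Fin.card_filter_val_lt]; omega
  rw [hcompl]
  exact sum_filter_apply_eq_and_image_eq_and_image_compl_eq _ S₁ S₂ hS hcard
    (by rw [card_compl, hcard, Fintype.card_fin]; omega) (by simpa using hz) i x

end Counting

section Hypermatrix

variable {m : ℕ} (hm : 0 < m)

theorem hmApplyC_add (A B : (Fin m → Fin n) → ℝ) (x : Fin n → ℂ) (i : Fin n) :
    hmApplyC hm (fun f => A f + B f) x i = hmApplyC hm A x i + hmApplyC hm B x i := by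
  simp only [hmApplyC, Complex.ofReal_add, add_mul, sum_add_distrib]

theorem hmApplyC_sub (A B : (Fin m → Fin n) → ℝ) (x : Fin n → ℂ) (i : Fin n) :
    hmApplyC hm (fun f => A f - B f) x i = hmApplyC hm A x i - hmApplyC hm B x i := by
  simp only [hmApplyC, Complex.ofReal_sub, sub_mul, sum_sub_distrib]

theorem isEigenvalue_congr {A B : (Fin m → Fin n) → ℝ}
    (h : ∀ x i, hmApplyC hm A x i = hmApplyC hm B x i) (lam : ℂ) :
    IsEigenvalue hm A lam ↔ IsEigenvalue hm B lam := by
  simp only [IsEigenvalue, h]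

theorem hmApplyC_sum_ite {ι : Type*} (E : Finset ι) (P : ι → (Fin m → Fin n) → Prop)
    [∀ e, DecidablePred (P e)] (w : ι → ℝ) (x : Fin n → ℂ) (i : Fin n) :
    hmApplyC hm (fun f => ∑ e ∈ E, if P e f then w e else 0) x i =
      ∑ e ∈ E, (w e : ℂ) *
        ∑ f : Fin m → Fin n with f ⟨0, hm⟩ = i ∧ P e f, ∏ j ∈ univ.erase ⟨0, hm⟩, x (f j) := by
  simp only [hmApplyC, filter_ne', Complex.ofReal_sum, sum_mul]
  rw [sum_comm]
  refine sum_congr rfl fun e _ => ?_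
  rw [mul_sum, ← filter_filter, sum_filter (P e)]
  refine sum_congr rfl fun f _ => ?_
  split_ifs <;> simp

end Hypermatrix

section Hypergraph

variable {m : ℕ}

theorem DirHypergraph.IsUniform.card_tail_add_card_head {H : DirHypergraph n}
    (hH : H.IsUniform m) {e : Finset (Fin n) × Finset (Fin n)} (he : e ∈ H.edges) :
    #e.1 + #e.2 = m := by
  rw [← card_union_of_disjoint (H.tail_head_disjoint e he)]
  exact hH e he

theorem outDeg_add_inDeg (H : DirHypergraph n) (v : Fin n) :
    outDeg H v + inDeg H v = undDeg H v := by
  rw [outDeg, inDeg, undDeg, ← card_union_of_disjoint, ← filter_or]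
  · simp only [mem_union]
  · exact disjoint_filter.2 fun e he h₁ h₂ => disjoint_left.1 (H.tail_head_disjoint e he) h₁ h₂

theorem diagHM_add (d d' : Fin n → ℝ) (f : Fin m → Fin n) :
    diagHM m d f + diagHM m d' f = diagHM m (fun v => d v + d' v) f := by
  simp only [diagHM, ← sum_add_distrib, ite_add_ite, add_zero]

variable (hm : 0 < m)

theorem hmApplyC_outAdj (H : DirHypergraph n) (hH : H.IsUniform m) (x : Fin n → ℂ)
    (i : Fin n) :
    hmApplyC hm (outAdj m H) x i =
      ∑ e ∈ H.edges, if i ∈ e.1 then ∏ v ∈ (e.1 ∪ e.2).erase i, x v else 0 := by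
  unfold outAdj
  rw [hmApplyC_sum_ite]
  refine sum_congr rfl fun e he => ?_
  have hcard := hH.card_tail_add_card_head he
  rw [sum_filter_apply_eq_and_image_lt_and_image_ge e.1 e.2 (H.tail_head_disjoint e he) hcard
    (card_pos.2 (H.tail_nonempty e he)) i x, show m - #e.1 = #e.2 by omega]
  split_ifs
  · push_cast; field_simp [Nat.factorial_ne_zero]
  · simp

theorem hmApplyC_inAdj (H : DirHypergraph n) (hH : H.IsUniform m) (x : Fin n → ℂ)
    (i : Fin n) :
    hmApplyC hm (inAdj m H) x i =
      ∑ e ∈ H.edges, if i ∈ e.2 then ∏ v ∈ (e.1 ∪ e.2).erase i, x v else 0 := by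
  unfold inAdj
  rw [hmApplyC_sum_ite]
  refine sum_congr rfl fun e he => ?_
  have hcard := hH.card_tail_add_card_head he
  rw [show m - #e.1 = #e.2 by omega, union_comm,
    sum_filter_apply_eq_and_image_lt_and_image_ge e.2 e.1 (H.tail_head_disjoint e he).symm
      (by omega) (card_pos.2 (H.head_nonempty e he)) i x]
  split_ifs
  · push_cast; field_simp [Nat.factorial_ne_zero]
  · simp

theorem hmApplyC_undAdj (H : DirHypergraph n) (hH : H.IsUniform m) (x : Fin n → ℂ)
    (i : Fin n) :
    hmApplyC hm (undAdj m H) x i =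
      ∑ e ∈ H.edges, if i ∈ e.1 ∪ e.2 then ∏ v ∈ (e.1 ∪ e.2).erase i, x v else 0 := by
  unfold undAdj
  rw [hmApplyC_sum_ite]
  refine sum_congr rfl fun e he => ?_
  have hfilter : ∀ f : Fin m → Fin n,
      (f ⟨0, hm⟩ = i ∧ Function.Injective f ∧ univ.image f = e.1 ∪ e.2) ↔
        (f ⟨0, hm⟩ = i ∧ univ.image f = e.1 ∪ e.2 ∧ univᶜ.image f = ∅) := by
    intro f
    refine and_congr_right fun _ => ⟨fun h => ⟨h.2, by simp⟩, fun h => ⟨?_, h.1⟩⟩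
    rw [← Set.injOn_univ, ← coe_univ, ← card_image_iff, h.1, hH e he, card_univ,
      Fintype.card_fin]
  rw [filter_congr fun f _ => hfilter f,
    sum_filter_apply_eq_and_image_eq_and_image_compl_eq univ _ ∅ (disjoint_empty_right _)
      (by rw [card_univ, Fintype.card_fin, hH e he]) (by simp) (mem_univ _) i x]
  split_ifs
  · rw [hH e he, card_empty, union_empty, Nat.factorial_zero, mul_one]
    push_cast; field_simp [Nat.factorial_ne_zero]
  · simp

theorem hmApplyC_outAdj_add_inAdj (H : DirHypergraph n) (hH : H.IsUniform m)
    (x : Fin n → ℂ) (i : Fin n) :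
    hmApplyC hm (outAdj m H) x i + hmApplyC hm (inAdj m H) x i =
      hmApplyC hm (undAdj m H) x i := by
  rw [hmApplyC_outAdj hm H hH, hmApplyC_inAdj hm H hH, hmApplyC_undAdj hm H hH,
    ← sum_add_distrib]
  refine sum_congr rfl fun e he => ?_
  by_cases h₁ : i ∈ e.1
  · simp [h₁, disjoint_left.1 (H.tail_head_disjoint e he) h₁]
  · simp [h₁]

end Hypergraph

/-- For a directed `m`-uniform hypergraph `H`, the
Laplacian `L_H = L_H⁺ + L_H⁻` is isospectral with the Laplacian
`L_{H_D} = D_{H_D} - A_{H_D}` of the underlying undirected hypergraph, and the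
signless Laplacian `𝕃_H = 𝕃_H⁺ + 𝕃_H⁻` is isospectral with
`𝕃_{H_D} = D_{H_D} + A_{H_D}`. -/
theorem laplacian_isospectral_und {m n : ℕ} (hm : 0 < m)
    (H : DirHypergraph n) (hH : H.IsUniform m) :
    (∀ lam : ℂ,
      IsEigenvalue hm
        (fun f => (diagHM m (fun v => (outDeg H v : ℝ)) f - outAdj m H f) +
          (diagHM m (fun v => (inDeg H v : ℝ)) f - inAdj m H f)) lam ↔
      IsEigenvalue hm
        (fun f => diagHM m (fun v => (undDeg H v : ℝ)) f - undAdj m H f) lam) ∧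
    (∀ lam : ℂ,
      IsEigenvalue hm
        (fun f => (diagHM m (fun v => (outDeg H v : ℝ)) f + outAdj m H f) +
          (diagHM m (fun v => (inDeg H v : ℝ)) f + inAdj m H f)) lam ↔
      IsEigenvalue hm
        (fun f => diagHM m (fun v => (undDeg H v : ℝ)) f + undAdj m H f) lam) := by
  have hD : ∀ x i, hmApplyC hm (diagHM m fun v => (outDeg H v : ℝ)) x i +
      hmApplyC hm (diagHM m fun v => (inDeg H v : ℝ)) x i =
        hmApplyC hm (diagHM m fun v => (undDeg H v : ℝ)) x i := by
    intro x i
    simp only [← hmApplyC_add, diagHM_add, ← Nat.cast_add, outDeg_add_inDeg]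
  have hA := hmApplyC_outAdj_add_inAdj hm H hH
  refine ⟨isEigenvalue_congr hm fun x i => ?_, isEigenvalue_congr hm fun x i => ?_⟩
  · rw [hmApplyC_add, hmApplyC_sub, hmApplyC_sub, hmApplyC_sub]
    linear_combination hD x i - hA x i
  · rw [hmApplyC_add, hmApplyC_add, hmApplyC_add, hmApplyC_add]
    linear_combination hD x i + hA x i
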